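/- arXiv:1907.11047 — 4 statements merged into one kernel-verified Lean document; each statement's English description precedes it below -/
import Mathlib

section
/- A fixed point with the small cycle property is indifferent: let U ⊆ ℂ be open, f analytic on U, z₀ ∈ U with f(z₀) = z₀. Assume f has the small cycle property at z₀, i.e. for every ε > 0 there exist an integer p ≥ 1 and a point w ≠ z₀ with f^p(w) = w and f^i(w) ∈ B(z₀, ε) for all 0 ≤ i < p. Then |f′(z₀)| = 1. -/
/-!
Near the fixed point `f` is its linearization up to an arbitrarily small error, so for every
`δ > 0` it moves points towards `z₀` by at most the factor `|f'(z₀)| + δ` and away from `z₀`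
by at least the factor `|f'(z₀)| - δ`. Iterating along a small cycle `w, f w, …, f^[p] w = w`
gives `dist w z₀ ≤ (|f'(z₀)| + δ)^p dist w z₀` and the reverse inequality with `|f'(z₀)| - δ`;
since `w ≠ z₀`, this forces `|f'(z₀)| - δ ≤ 1 ≤ |f'(z₀)| + δ`.
-/

open Filter Topology Function

section Orbits

variable {X : Type*} [PseudoMetricSpace X] {f : X → X} {z₀ : X} {S : Set X} {c : ℝ}

theorem dist_iterate_le_of_forall_mem (hc : 0 ≤ c)
    (hS : ∀ z ∈ S, dist (f z) z₀ ≤ c * dist z z₀) {w : X} {p : ℕ}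
    (horb : ∀ i < p, f^[i] w ∈ S) : dist (f^[p] w) z₀ ≤ c ^ p * dist w z₀ := by
  induction p with
  | zero => simp
  | succ n ih =>
    rw [iterate_succ_apply']
    calc dist (f (f^[n] w)) z₀ ≤ c * dist (f^[n] w) z₀ := hS _ (horb n n.lt_succ_self)
      _ ≤ c * (c ^ n * dist w z₀) := by
        gcongr
        exact ih fun i hi => horb i (hi.trans n.lt_succ_self)
      _ = c ^ (n + 1) * dist w z₀ := by ring

theorem le_dist_iterate_of_forall_mem (hc : 0 ≤ c)
    (hS : ∀ z ∈ S, c * dist z z₀ ≤ dist (f z) z₀) {w : X} {p : ℕ}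
    (horb : ∀ i < p, f^[i] w ∈ S) : c ^ p * dist w z₀ ≤ dist (f^[p] w) z₀ := by
  induction p with
  | zero => simp
  | succ n ih =>
    rw [iterate_succ_apply']
    calc c ^ (n + 1) * dist w z₀ = c * (c ^ n * dist w z₀) := by ring
      _ ≤ c * dist (f^[n] w) z₀ := by
        gcongr
        exact ih fun i hi => horb i (hi.trans n.lt_succ_self)
      _ ≤ dist (f (f^[n] w)) z₀ := hS _ (horb n n.lt_succ_self)

end Orbits

def HasSmallCycles {X : Type*} [PseudoMetricSpace X] (f : X → X) (z₀ : X) : Prop :=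
  ∀ ε > 0, ∃ p : ℕ, 1 ≤ p ∧ ∃ w : X, w ≠ z₀ ∧ f^[p] w = w ∧
    ∀ i < p, f^[i] w ∈ Metric.ball z₀ ε

namespace HasSmallCycles

variable {X : Type*} [MetricSpace X] {f : X → X} {z₀ : X} {c : ℝ}

theorem one_le_of_eventually_dist_le (h : HasSmallCycles f z₀) (hc : 0 ≤ c)
    (hf : ∀ᶠ z in 𝓝 z₀, dist (f z) z₀ ≤ c * dist z z₀) : 1 ≤ c := by
  obtain ⟨ε, hε, hball⟩ := Metric.eventually_nhds_iff_ball.mp hf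
  obtain ⟨p, hp, w, hw, hper, horb⟩ := h ε hε
  have hcycle := dist_iterate_le_of_forall_mem hc hball horb
  rw [hper] at hcycle
  have hpow : 1 ≤ c ^ p :=
    le_of_mul_le_mul_right (by rwa [one_mul]) (dist_pos.mpr hw)
  exact (one_le_pow_iff_of_nonneg hc (by omega)).mp hpow

theorem le_one_of_eventually_le_dist (h : HasSmallCycles f z₀)
    (hf : ∀ᶠ z in 𝓝 z₀, c * dist z z₀ ≤ dist (f z) z₀) : c ≤ 1 := by
  by_contra! hc
  obtain ⟨ε, hε, hball⟩ := Metric.eventually_nhds_iff_ball.mp hf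
  obtain ⟨p, hp, w, hw, hper, horb⟩ := h ε hε
  have hcycle := le_dist_iterate_of_forall_mem (by linarith) hball horb
  rw [hper] at hcycle
  have hpow : c ^ p ≤ 1 :=
    le_of_mul_le_mul_right (by rwa [one_mul]) (dist_pos.mpr hw)
  exact hc.not_ge ((pow_le_one_iff_of_nonneg (by linarith) (by omega)).mp hpow)

end HasSmallCycles

theorem HasDerivAt.eventually_abs_dist_sub_le {𝕜 : Type*} [NontriviallyNormedField 𝕜]
    {f : 𝕜 → 𝕜} {d z₀ : 𝕜} (hd : HasDerivAt f d z₀) (hfix : f z₀ = z₀) {δ : ℝ} (hδ : 0 < δ) :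
    ∀ᶠ z in 𝓝 z₀, |dist (f z) z₀ - ‖d‖ * dist z z₀| ≤ δ * dist z z₀ := by
  filter_upwards [(hasDerivAt_iff_isLittleO.mp hd).bound hδ] with z hz
  rw [hfix, smul_eq_mul] at hz
  rw [dist_eq_norm, dist_eq_norm, mul_comm, ← norm_mul]
  exact (abs_norm_sub_norm_le _ _).trans hz

theorem small_cycles_implies_indifferent_general (U : Set ℂ) (f : ℂ → ℂ)
    (hf : AnalyticOnNhd ℂ f U) (z₀ : ℂ) (hz₀ : z₀ ∈ U) (hfix : f z₀ = z₀)
    (hsc : ∀ ε > 0, ∃ p : ℕ, 1 ≤ p ∧ ∃ w : ℂ, w ≠ z₀ ∧ f^[p] w = w ∧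
      ∀ i < p, f^[i] w ∈ Metric.ball z₀ ε) :
    ‖deriv f z₀‖ = 1 := by
  have hd : HasDerivAt f (deriv f z₀) z₀ := (hf z₀ hz₀).differentiableAt.hasDerivAt
  have hcycles : HasSmallCycles f z₀ := hsc
  refine le_antisymm (le_of_forall_pos_le_add fun δ hδ => ?_)
    (le_of_forall_pos_le_add fun δ hδ => ?_)
  · have hexpand : ∀ᶠ z in 𝓝 z₀, (‖deriv f z₀‖ - δ) * dist z z₀ ≤ dist (f z) z₀ :=
      (hd.eventually_abs_dist_sub_le hfix hδ).mono fun z hz => by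
        linarith [(abs_le.mp hz).1]
    linarith [hcycles.le_one_of_eventually_le_dist hexpand]
  · have hcontract : ∀ᶠ z in 𝓝 z₀, dist (f z) z₀ ≤ (‖deriv f z₀‖ + δ) * dist z z₀ :=
      (hd.eventually_abs_dist_sub_le hfix hδ).mono fun z hz => by
        linarith [(abs_le.mp hz).2]
    exact hcycles.one_le_of_eventually_dist_le (by positivity) hcontract

/-- A fixed point with the small cycle property is indifferent: if `f` is analytic on
open `U`, `f z₀ = z₀`, and every neighborhood of `z₀` contains a periodic cycle of `f`
avoiding `z₀`, then `|f'(z₀)| = 1`. -/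
theorem small_cycles_implies_indifferent (U : Set ℂ) (hU : IsOpen U) (f : ℂ → ℂ)
    (hf : AnalyticOnNhd ℂ f U) (z₀ : ℂ) (hz₀ : z₀ ∈ U) (hfix : f z₀ = z₀)
    (hsc : ∀ ε > 0, ∃ p : ℕ, 1 ≤ p ∧ ∃ w : ℂ, w ≠ z₀ ∧ f^[p] w = w ∧
      ∀ i < p, f^[i] w ∈ Metric.ball z₀ ε) :
    ‖deriv f z₀‖ = 1 :=
  small_cycles_implies_indifferent_general U f hf z₀ hz₀ hfix hsc
end

section
/- A fixed point with the small cycle property and irrational rotation number is a Cremer point: let U ⊆ ℂ be open, f analytic on U, z₀ ∈ U with f(z₀) = z₀ and f′(z₀) = e^{2πiθ} for some irrational θ ∈ ℝ. If f has the small cycle property at z₀, then f is not linearizable at z₀, i.e. there exist no open neighborhood V of z₀ and injective analytic map φ : V → ℂ with φ(z₀) = 0 such that φ(f(z)) = e^{2πiθ}·φ(z) whenever z ∈ V and f(z) ∈ V. -/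
/-- A fixed point with the small cycle property and irrational rotation number is a
Cremer point: if `f` is analytic on open `U`, `f z₀ = z₀`, `f'(z₀) = e^{2πiθ}` with `θ`
irrational, and `f` has the small cycle property at `z₀`, then `f` is not linearizable
at `z₀`. -/
theorem small_cycles_implies_cremer (U : Set ℂ) (hU : IsOpen U) (f : ℂ → ℂ)
    (hf : AnalyticOnNhd ℂ f U) (z₀ : ℂ) (hz₀ : z₀ ∈ U) (hfix : f z₀ = z₀)
    (θ : ℝ) (hθ : Irrational θ)
    (hd : deriv f z₀ = Complex.exp (2 * Real.pi * Complex.I * θ))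
    (hsc : ∀ ε > 0, ∃ p : ℕ, 1 ≤ p ∧ ∃ w : ℂ, w ≠ z₀ ∧ f^[p] w = w ∧
      ∀ i < p, f^[i] w ∈ Metric.ball z₀ ε) :
    ¬ ∃ (V : Set ℂ) (φ : ℂ → ℂ), IsOpen V ∧ z₀ ∈ V ∧
        AnalyticOnNhd ℂ φ V ∧ Set.InjOn φ V ∧ φ z₀ = 0 ∧
        ∀ z ∈ V, f z ∈ V →
          φ (f z) = Complex.exp (2 * Real.pi * Complex.I * θ) * φ z := by
  rintro ⟨V, φ, hVopen, hz₀V, hφan, hφinj, hφ0, hφeq⟩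
  set lam : ℂ := Complex.exp (2 * Real.pi * Complex.I * θ) with hlam
  obtain ⟨ε, hε, hball⟩ := Metric.isOpen_iff.mp hVopen z₀ hz₀V
  obtain ⟨p, hp, w, hw, hwp, hiter⟩ := hsc ε hε
  -- all iterates up to p are in V
  have hmemV : ∀ i ≤ p, f^[i] w ∈ V := by
    intro i hi
    rcases lt_or_eq_of_le hi with h | h
    · exact hball (hiter i h)
    · subst h; rw [hwp]
      exact hball (by simpa using hiter 0 (by omega))
  have key : ∀ i ≤ p, φ (f^[i] w) = lam ^ i * φ w := by
    intro i
    induction i with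
    | zero => intro _; simp
    | succ n ih =>
      intro hn
      have h1 : f^[n] w ∈ V := hmemV n (by omega)
      have h2 : f (f^[n] w) ∈ V := by
        have := hmemV (n + 1) hn
        rwa [Function.iterate_succ_apply'] at this
      rw [Function.iterate_succ_apply', hφeq _ h1 h2, ih (by omega), pow_succ]
      ring
  have hwV : w ∈ V := by simpa using hmemV 0 (Nat.zero_le _)
  have hφw : φ w ≠ 0 := by
    intro h
    exact hw (hφinj hwV hz₀V (by rw [h, hφ0]))
  have hpe : lam ^ p * φ w = φ w := by
    have := key p le_rfl
    rw [hwp] at this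
    exact this.symm
  have hlam1 : lam ^ p = 1 := by
    have : (lam ^ p - 1) * φ w = 0 := by rw [sub_mul, hpe]; ring
    rcases mul_eq_zero.mp this with h | h
    · exact sub_eq_zero.mp h
    · exact absurd h hφw
  -- now derive contradiction with irrationality
  rw [hlam, ← Complex.exp_nat_mul] at hlam1
  obtain ⟨n, hn⟩ := Complex.exp_eq_one_iff.mp hlam1
  have hπ : (2 * Real.pi * Complex.I : ℂ) ≠ 0 := by
    simp [Complex.I_ne_zero, Real.pi_ne_zero]
  have hpn : (p : ℂ) * θ = n := by
    have h : (2 * Real.pi * Complex.I) * ((p : ℂ) * θ) = (2 * Real.pi * Complex.I) * n := by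
      linear_combination hn
    exact mul_left_cancel₀ hπ h
  have hpnR : (p : ℝ) * θ = n := by exact_mod_cast hpn
  have : θ = (n : ℝ) / p := by
    field_simp at hpnR ⊢
    linarith [hpnR]
  exact hθ ⟨(n : ℚ) / p, by push_cast [this]; ring⟩
end

section
/- Persistence of small nonzero periodic points in the family f_θ: let θ₁ ∈ ℝ, let p ≥ 1 be an integer, let r > 0, and suppose there exists w₀ ∈ ℂ with w₀ ≠ 0, |w₀| < r and f_{θ₁}^p(w₀) = w₀. Then there exists δ > 0 such that for every θ ∈ ℝ with |θ − θ₁| < δ there exists w ∈ ℂ with w ≠ 0, |w| < r and f_θ^p(w) = w. -/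
/-!
The fixed points of `f_θ^p` are the roots of `q_θ(z) = f_θ^p(z) - z`, a monic polynomial of
degree `2^p`. Over `ℂ`, `‖q_θ(z)‖` is the product of the distances from `z` to the roots of `q_θ`,
so `‖q_θ(z)‖ < ε ^ 2^p` forces a root within `ε` of `z`. As `θ ↦ q_θ(w₀)` is continuous and
vanishes at `θ₁`, for `θ` near `θ₁` there is a fixed point of `f_θ^p` within
`ε = min ‖w₀‖ (r - ‖w₀‖)` of `w₀`; it is nonzero and of norm `< r`.
-/

/-- The quadratic polynomial `f_θ(z) = e^{2πiθ} z + z²`. -/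
noncomputable def fTheta (θ : ℝ) (z : ℂ) : ℂ :=
  Complex.exp (2 * Real.pi * Complex.I * θ) * z + z ^ 2

open Filter Function Polynomial Topology

namespace Polynomial

theorem exists_mem_roots_norm_sub_lt_of_norm_eval_lt {K : Type*} [NormedField K] {f : K[X]}
    (hm : f.Monic) (hs : f.Splits) {ε : ℝ} (hε : 0 ≤ ε) {z : K}
    (h : ‖f.eval z‖ < ε ^ f.natDegree) : ∃ a ∈ f.roots, ‖z - a‖ < ε := by
  by_contra! hfar
  refine h.not_ge ?_
  calc ε ^ f.natDegree = (f.roots.map fun _ => ε).prod := by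
        rw [Multiset.map_const', Multiset.prod_replicate, hs.natDegree_eq_card_roots]
    _ ≤ (f.roots.map fun a => ‖z - a‖).prod :=
        Multiset.prod_map_le_prod_map₀ _ _ (fun _ _ => hε) hfar
    _ = ‖f.eval z‖ := by
        rw [hs.eval_eq_prod_roots_of_monic hm]
        exact Multiset.prod_hom' f.roots (normHom : K →*₀ ℝ) (z - ·)

section IterateComp

variable {R : Type*} [Ring R] [NoZeroDivisors R] [Nontrivial R] {P : R[X]}

theorem Monic.iterate_comp_X (hP : P.Monic) (hd : P.natDegree ≠ 0) (k : ℕ) :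
    (P.comp^[k] X).Monic := by
  induction k with
  | zero => exact monic_X
  | succ k ih =>
    rw [iterate_succ_apply']
    exact hP.comp ih (by simp [hd])

theorem natDegree_X_lt_natDegree_iterate_comp_X (hd : 2 ≤ P.natDegree) {k : ℕ} (hk : 1 ≤ k) :
    (X : R[X]).natDegree < (P.comp^[k] X).natDegree := by
  simp only [natDegree_iterate_comp, natDegree_X, mul_one]
  exact (Nat.one_lt_two.trans_le hd).trans_le (Nat.le_self_pow (by omega) _)

theorem Monic.iterate_comp_X_sub_X (hP : P.Monic) (hd : 2 ≤ P.natDegree) {k : ℕ} (hk : 1 ≤ k) :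
    (P.comp^[k] X - X).Monic :=
  (hP.iterate_comp_X (by omega) k).sub_of_left
    (degree_lt_degree (natDegree_X_lt_natDegree_iterate_comp_X hd hk))

theorem natDegree_iterate_comp_X_sub_X (hd : 2 ≤ P.natDegree) {k : ℕ} (hk : 1 ≤ k) :
    (P.comp^[k] X - X).natDegree = P.natDegree ^ k := by
  rw [natDegree_sub_eq_left_of_natDegree_lt (natDegree_X_lt_natDegree_iterate_comp_X hd hk),
    natDegree_iterate_comp, natDegree_X, mul_one]

end IterateComp

theorem exists_isFixedPt_iterate_eval_norm_sub_lt {K : Type*} [NormedField K] [IsAlgClosed K]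
    {P : K[X]} (hP : P.Monic) (hd : 2 ≤ P.natDegree) {k : ℕ} (hk : 1 ≤ k) {ε : ℝ} (hε : 0 ≤ ε)
    {z : K} (h : ‖(P.eval ·)^[k] z - z‖ < ε ^ P.natDegree ^ k) :
    ∃ w, ‖z - w‖ < ε ∧ IsFixedPt (P.eval ·)^[k] w := by
  have heval (x : K) : (P.comp^[k] X - X).eval x = (P.eval ·)^[k] x - x := by
    simp
  obtain ⟨w, hw, hwz⟩ := exists_mem_roots_norm_sub_lt_of_norm_eval_lt
    (hP.iterate_comp_X_sub_X hd hk) (IsAlgClosed.splits _) hε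
    (z := z) (by rwa [heval, natDegree_iterate_comp_X_sub_X hd hk])
  refine ⟨w, hwz, sub_eq_zero.mp ?_⟩
  rw [← heval]
  exact isRoot_of_mem_roots hw

end Polynomial

theorem continuous_iterate_apply_of_continuous_uncurry {X Y : Type*} [TopologicalSpace X]
    [TopologicalSpace Y] {f : X → Y → Y} (hf : Continuous (uncurry f)) (n : ℕ) (y : Y) :
    Continuous fun x => (f x)^[n] y := by
  induction n with
  | zero => exact continuous_const
  | succ n ih =>
    simp only [iterate_succ_apply']
    exact hf.comp (continuous_id.prodMk ih)

noncomputable def fThetaPoly (θ : ℝ) : ℂ[X] :=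
  X ^ 2 + C (Complex.exp (2 * Real.pi * Complex.I * θ)) * X

theorem fTheta_eq_eval (θ : ℝ) : fTheta θ = (fThetaPoly θ).eval := by
  ext z
  simp [fTheta, fThetaPoly]
  ring

theorem fThetaPoly_monic (θ : ℝ) : (fThetaPoly θ).Monic :=
  monic_X_pow_add (degree_C_mul_X_le _ |>.trans_lt (by norm_num))

theorem fThetaPoly_natDegree (θ : ℝ) : (fThetaPoly θ).natDegree = 2 := by
  unfold fThetaPoly
  compute_degree!

theorem continuous_uncurry_fTheta : Continuous (uncurry fTheta) := by
  unfold fTheta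
  fun_prop

theorem exists_isFixedPt_iterate_fTheta_norm_sub_lt (θ : ℝ) {p : ℕ} (hp : 1 ≤ p) {ε : ℝ}
    (hε : 0 ≤ ε) {z : ℂ} (h : ‖(fTheta θ)^[p] z - z‖ < ε ^ 2 ^ p) :
    ∃ w, ‖z - w‖ < ε ∧ IsFixedPt (fTheta θ)^[p] w := by
  rw [fTheta_eq_eval] at h ⊢
  rw [← fThetaPoly_natDegree θ] at h
  exact exists_isFixedPt_iterate_eval_norm_sub_lt (fThetaPoly_monic θ)
    (fThetaPoly_natDegree θ).ge hp hε h

theorem small_periodic_points_persist_general (θ₁ : ℝ) (p : ℕ) (hp : 1 ≤ p) (r : ℝ)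
    (w₀ : ℂ) (hw₀ : w₀ ≠ 0) (hw₀r : ‖w₀‖ < r) (hper : (fTheta θ₁)^[p] w₀ = w₀) :
    ∃ δ > 0, ∀ θ : ℝ, |θ - θ₁| < δ →
      ∃ w : ℂ, w ≠ 0 ∧ ‖w‖ < r ∧ (fTheta θ)^[p] w = w := by
  set ε := min ‖w₀‖ (r - ‖w₀‖)
  have hε : 0 < ε := lt_min (norm_pos_iff.mpr hw₀) (sub_pos.mpr hw₀r)
  have hcont : Continuous fun θ => ‖(fTheta θ)^[p] w₀ - w₀‖ :=
    ((continuous_iterate_apply_of_continuous_uncurry continuous_uncurry_fTheta p w₀).sub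
      continuous_const).norm
  have hnear : ∀ᶠ θ in 𝓝 θ₁, ‖(fTheta θ)^[p] w₀ - w₀‖ < ε ^ 2 ^ p :=
    hcont.continuousAt.eventually_lt continuousAt_const (by simpa [hper] using pow_pos hε _)
  obtain ⟨δ, hδ, hball⟩ := Metric.eventually_nhds_iff.mp hnear
  refine ⟨δ, hδ, fun θ hθ => ?_⟩
  obtain ⟨w, hw, hfix⟩ :=
    exists_isFixedPt_iterate_fTheta_norm_sub_lt θ hp hε.le (hball (Real.dist_eq θ θ₁ ▸ hθ))
  refine ⟨w, ?_, ?_, hfix⟩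
  · rintro rfl
    simpa using hw.trans_le (min_le_left _ _)
  · linarith [norm_le_norm_add_norm_sub' w w₀, norm_sub_rev w₀ w, min_le_right ‖w₀‖ (r - ‖w₀‖)]

/-- Persistence of small nonzero periodic points in the family `f_θ`: if `f_{θ₁}` has a
nonzero periodic point of period `p` of modulus `< r`, then so does `f_θ` for every `θ`
close enough to `θ₁`. -/
theorem small_periodic_points_persist (θ₁ : ℝ) (p : ℕ) (hp : 1 ≤ p) (r : ℝ) (hr : 0 < r)
    (w₀ : ℂ) (hw₀ : w₀ ≠ 0) (hw₀r : ‖w₀‖ < r) (hper : (fTheta θ₁)^[p] w₀ = w₀) :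
    ∃ δ > 0, ∀ θ : ℝ, |θ - θ₁| < δ →
      ∃ w : ℂ, w ≠ 0 ∧ ‖w‖ < r ∧ (fTheta θ)^[p] w = w :=
  small_periodic_points_persist_general θ₁ p hp r w₀ hw₀ hw₀r hper
end

section
/- Cremer parameters with small cycles form a residual set: there exists a dense Gδ subset A ⊆ ℝ such that every θ ∈ A is irrational and for every ε > 0 there exist an integer p ≥ 1 and a point w ∈ ℂ with w ≠ 0, |w| < ε and f_θ^p(w) = w (i.e. f_θ has a nonzero periodic point in every punctured neighborhood of its fixed point 0). -/
/-!
If `c ^ q ≠ 1`, the nonzero fixed points of the `q`-th iterate of `z ↦ c z + z²` are the roots of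
the monic polynomial `(f^q(z) - z) / z` of degree `2 ^ q - 1`, whose constant term is the
multiplier defect `c ^ q - 1`. Their moduli multiply to `‖c ^ q - 1‖`, so one of them has modulus
at most `‖c ^ q - 1‖ ^ (1 / (2 ^ q - 1))`. For each `δ > 0`, the parameters `θ` with
`‖e^{2πiqθ} - 1‖ < δ ^ (2 ^ q - 1)` for some `q ≥ 1` form an open set containing every rational,
so the irrational `θ` lying in all of these sets for `δ = 1 / (n + 1)` form a residual set.
-/

open Polynomial Complex
open scoped Real

namespace Polynomial

section Iterate

variable {R : Type*} [CommSemiring R] {p : R[X]}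

theorem Monic.iterate_comp_X_s15 [NoZeroDivisors R] (hp : p.Monic) (hdeg : p.natDegree ≠ 0) (n : ℕ) :
    (p.comp^[n] X).Monic := by
  have : Nontrivial R :=
    Nontrivial.of_polynomial_ne (ne_zero_of_natDegree_gt (Nat.pos_of_ne_zero hdeg))
  induction n with
  | zero => exact monic_X
  | succ n ih =>
    rw [Function.iterate_succ_apply']
    refine hp.comp ih ?_
    rw [natDegree_iterate_comp, natDegree_X, mul_one]
    exact pow_ne_zero n hdeg

theorem eval_zero_iterate_comp_X (h0 : p.eval 0 = 0) (n : ℕ) : (p.comp^[n] X).eval 0 = 0 := by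
  rw [iterate_comp_eval, eval_X]
  exact Function.iterate_fixed h0 n

theorem eval_zero_derivative_iterate_comp_X (h0 : p.eval 0 = 0) (n : ℕ) :
    (derivative (p.comp^[n] X)).eval 0 = (derivative p).eval 0 ^ n := by
  induction n with
  | zero => simp
  | succ n ih =>
    rw [Function.iterate_succ_apply', derivative_comp, eval_mul, eval_comp,
      eval_zero_iterate_comp_X h0, ih, pow_succ]

end Iterate

variable {K : Type*} [NormedField K] [IsAlgClosed K]

theorem exists_isRoot_norm_pow_natDegree_le {p : K[X]} (hp : p.Monic) (hdeg : p.natDegree ≠ 0) :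
    ∃ w, p.IsRoot w ∧ ‖w‖ ^ p.natDegree ≤ ‖p.coeff 0‖ := by
  have hroots : p.roots ≠ 0 := by
    rw [← Multiset.card_pos, IsAlgClosed.card_roots_eq_natDegree]
    exact Nat.pos_of_ne_zero hdeg
  obtain ⟨w, hw, hmin⟩ := Multiset.exists_min_image (‖·‖₊) hroots
  refine ⟨w, isRoot_of_mem_roots hw, ?_⟩
  have : ‖w‖₊ ^ p.natDegree ≤ ‖p.coeff 0‖₊ := calc
    ‖w‖₊ ^ p.natDegree = ‖w‖₊ ^ (p.roots.map (‖·‖₊)).card := by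
      rw [Multiset.card_map, IsAlgClosed.card_roots_eq_natDegree]
    _ ≤ (p.roots.map (‖·‖₊)).prod :=
      Multiset.pow_card_le_prod (Multiset.forall_mem_map_iff.2 hmin)
    _ = ‖p.coeff 0‖₊ := by
      rw [(IsAlgClosed.splits p).coeff_zero_eq_prod_roots_of_monic hp, nnnorm_mul, nnnorm_pow,
        nnnorm_neg, nnnorm_one, one_pow, one_mul]
      exact (map_multiset_prod (nnnormHom : K →*₀ NNReal) _).symm
  exact_mod_cast this

theorem exists_ne_zero_eval_eq_self_norm_pow_le {p : K[X]} (hp : p.Monic)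
    (hdeg : 2 ≤ p.natDegree) (h0 : p.eval 0 = 0) (h1 : (derivative p).eval 0 ≠ 1) :
    ∃ w ≠ 0, p.eval w = w ∧ ‖w‖ ^ (p.natDegree - 1) ≤ ‖(derivative p).eval 0 - 1‖ := by
  have hXp : (X : K[X]).natDegree < p.natDegree := by rw [natDegree_X]; omega
  set h := (p - X).divX
  have hfactor : h * X = p - X := by
    have := divX_mul_X_add (p - X)
    rwa [coeff_sub, coeff_X_zero, coeff_zero_eq_eval_zero, h0, sub_zero, C_0, add_zero] at this
  have hmonic : h.Monic :=
    monic_X.of_mul_monic_right (hfactor ▸ hp.sub_of_left (degree_lt_degree hXp))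
  have hdeg_h : h.natDegree = p.natDegree - 1 := by
    rw [natDegree_divX_eq_natDegree_tsub_one, natDegree_sub_eq_left_of_natDegree_lt hXp]
  have hcoeff : h.coeff 0 = (derivative p).eval 0 - 1 := by
    rw [coeff_divX, ← coeff_zero_eq_eval_zero, coeff_derivative, coeff_sub, coeff_X_one]
    norm_num
  obtain ⟨w, hw, hle⟩ := exists_isRoot_norm_pow_natDegree_le hmonic (by omega)
  refine ⟨w, ?_, ?_, hdeg_h ▸ hcoeff ▸ hle⟩
  · rintro rfl
    exact h1 (sub_eq_zero.1 (hcoeff ▸ coeff_zero_eq_eval_zero h ▸ hw))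
  · have := congrArg (eval w) hfactor
    rw [eval_mul, hw.eq_zero, zero_mul, eval_sub, eval_X] at this
    exact sub_eq_zero.1 this.symm

end Polynomial

theorem exists_ne_zero_iterate_quadratic_eq_self_norm_pow_le {K : Type*} [NormedField K]
    [IsAlgClosed K] (c : K) {q : ℕ} (hq : q ≠ 0) (hc : c ^ q ≠ 1) :
    ∃ w ≠ 0, (fun z => c * z + z ^ 2)^[q] w = w ∧ ‖w‖ ^ (2 ^ q - 1) ≤ ‖c ^ q - 1‖ := by
  set p : K[X] := C c * X + X ^ 2
  have hmonic : p.Monic := by simp only [p]; monicity!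
  have hdeg : p.natDegree = 2 := by simp only [p]; compute_degree!
  have h0 : p.eval 0 = 0 := by simp [p]
  have h1 : (derivative p).eval 0 = c := by simp [p]
  have hdeg_iter : (p.comp^[q] X).natDegree = 2 ^ q := by
    rw [natDegree_iterate_comp, hdeg, natDegree_X, mul_one]
  obtain ⟨w, hw0, hfix, hle⟩ := exists_ne_zero_eval_eq_self_norm_pow_le
    (hmonic.iterate_comp_X_s15 (by omega) q) (hdeg_iter ▸ Nat.le_self_pow hq 2)
    (eval_zero_iterate_comp_X h0 q) (by rwa [eval_zero_derivative_iterate_comp_X h0, h1])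
  rw [hdeg_iter, eval_zero_derivative_iterate_comp_X h0, h1] at hle
  refine ⟨w, hw0, ?_, hle⟩
  have hp : (fun z => c * z + z ^ 2) = (p.eval ·) := by ext; simp [p]
  rwa [hp, ← eval_X (x := w), ← iterate_comp_eval, eval_X]

theorem exp_two_pi_I_mul_pow_eq_one_iff (θ : ℝ) (q : ℕ) :
    exp (2 * π * I * θ) ^ q = 1 ↔ ∃ k : ℤ, (q : ℝ) * θ = k := by
  rw [← exp_nat_mul, exp_eq_one_iff]
  refine exists_congr fun k => ⟨fun h => ?_, fun h => ?_⟩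
  · have h2 : (2 * π * I : ℂ) ≠ 0 := by simp [Real.pi_ne_zero]
    have : ((q * θ : ℝ) : ℂ) = k := by
      push_cast
      exact mul_right_cancel₀ h2 (by linear_combination h)
    exact_mod_cast this
  · have : ((q * θ : ℝ) : ℂ) = k := by exact_mod_cast h
    push_cast at this
    linear_combination (2 * π * I) * this

theorem Irrational.exp_two_pi_I_mul_pow_ne_one {θ : ℝ} (hθ : Irrational θ) {q : ℕ} (hq : q ≠ 0) :
    exp (2 * π * I * θ) ^ q ≠ 1 := fun h => by
  obtain ⟨k, hk⟩ := (exp_two_pi_I_mul_pow_eq_one_iff θ q).1 h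
  exact (hθ.natCast_mul hq).ne_int k hk

def nearlyResonant (δ : ℝ) : Set ℝ :=
  ⋃ (q : ℕ) (_ : q ≠ 0), {θ | ‖exp (2 * π * I * θ) ^ q - 1‖ < δ ^ (2 ^ q - 1)}

theorem isOpen_nearlyResonant (δ : ℝ) : IsOpen (nearlyResonant δ) :=
  isOpen_iUnion fun _ => isOpen_iUnion fun _ => isOpen_lt (by fun_prop) continuous_const

theorem dense_nearlyResonant {δ : ℝ} (hδ : 0 < δ) : Dense (nearlyResonant δ) := by
  refine Rat.denseRange_cast.mono ?_
  rintro _ ⟨r, rfl⟩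
  refine Set.mem_biUnion (x := r.den) r.den_nz ?_
  have hr : exp (2 * π * I * (r : ℝ)) ^ r.den = 1 :=
    (exp_two_pi_I_mul_pow_eq_one_iff _ _).2 ⟨r.num, by exact_mod_cast r.den_mul_eq_num⟩
  simp only [Set.mem_ofPred_eq, hr, sub_self, norm_zero]
  positivity

/-- There is a dense Gδ set of irrational parameters `θ` for which `f_θ` has a nonzero
periodic point in every punctured neighborhood of its fixed point `0` (small cycles). -/
theorem residual_set_of_small_cycle_parameters :
    ∃ A : Set ℝ, Dense A ∧ IsGδ A ∧
      ∀ θ ∈ A, Irrational θ ∧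
        ∀ ε > 0, ∃ p : ℕ, 1 ≤ p ∧
          ∃ w : ℂ, w ≠ 0 ∧ ‖w‖ < ε ∧ (fTheta θ)^[p] w = w := by
  have hresonant : ∀ᶠ θ in residual ℝ, ∀ n : ℕ, θ ∈ nearlyResonant (1 / (n + 1)) :=
    eventually_countable_forall.2 fun n =>
      residual_of_dense_open (isOpen_nearlyResonant _) (dense_nearlyResonant (by positivity))
  obtain ⟨A, hA, hGδ, hdense⟩ := mem_residual.1 (hresonant.and eventually_residual_irrational)
  refine ⟨A, hdense, hGδ, fun θ hθ => ?_⟩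
  obtain ⟨hθres, hθirr⟩ := hA hθ
  refine ⟨hθirr, fun ε hε => ?_⟩
  obtain ⟨n, hn⟩ := exists_nat_one_div_lt hε
  obtain ⟨q, hq, hsmall⟩ := Set.mem_iUnion₂.1 (hθres n)
  obtain ⟨w, hw0, hfix, hle⟩ := exists_ne_zero_iterate_quadratic_eq_self_norm_pow_le _ hq
    (hθirr.exp_two_pi_I_mul_pow_ne_one hq)
  have hw : ‖w‖ < 1 / (n + 1) :=
    lt_of_pow_lt_pow_left₀ _ (by positivity) (hle.trans_lt hsmall)
  exact ⟨q, Nat.one_le_iff_ne_zero.2 hq, w, hw0, hw.trans hn, hfix⟩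
end
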